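/- Let n ≥ 1 and let X_1, …, X_n be i.i.d. real-valued random variables with common CDF F, let F_n be their empirical CDF, let t ≥ 1 be a natural number, and let x ∈ ℝ satisfy 1 − F(x) ≤ 1/t². Then for every δ ∈ (0,2), P( |F_n(x)^t − F(x)^t| ≥ √( 2 ln(2/δ) / n ) + (2t ln(2/δ))/(3n) ) ≤ δ. -/

import Mathlib

/-!
As `a ↦ a ^ t` is `t`-Lipschitz on `[0, 1]`, it suffices to bound by `δ` the probability that
the number `N` of sample points `≤ x` deviates from `n F(x)` by at least `√(2 v L) + 2 L / 3`,
where `L = log (2 / δ)` and `v = n / t²`: the factor `t` of the Lipschitz bound is exactly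
absorbed by `v`. Now `n - N` is a sum of independent Bernoulli variables of total mean
`μ = n (1 - F(x)) ≤ v` by the light tail. Its moment generating function is dominated by the
Poisson one, `exp (μ (eˡ - 1))`, and Chernoff's bound combined with Bernstein's estimate
`(1 - l / 3) (eˡ - 1 - l) ≤ l² / 2` (upper tail) or with `e⁻ˡ - 1 + l ≤ l² / 2` (lower tail)
bounds each tail by `e⁻ᴸ = δ / 2`.
-/

open Real MeasureTheory ProbabilityTheory

namespace Real

lemma nonneg_of_hasDerivAt_of_map_zero {f f' : ℝ → ℝ} (hf : ∀ y, HasDerivAt f (f' y) y)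
    (hf' : ∀ y, 0 < y → 0 ≤ f' y) (h0 : f 0 = 0) {l : ℝ} (hl : 0 ≤ l) : 0 ≤ f l := by
  have hmono : MonotoneOn f (Set.Ici 0) :=
    monotoneOn_of_hasDerivWithinAt_nonneg (convex_Ici 0)
      (fun y _ ↦ (hf y).continuousAt.continuousWithinAt) (fun y _ ↦ (hf y).hasDerivWithinAt)
      (fun y hy ↦ hf' y (by simpa using hy))
  simpa [h0] using hmono Set.self_mem_Ici hl hl

lemma add_two_add_exp_mul_sub_two_nonneg {l : ℝ} (hl : 0 ≤ l) :
    0 ≤ l + 2 + exp l * (l - 2) := by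
  refine nonneg_of_hasDerivAt_of_map_zero (f := fun l ↦ l + 2 + exp l * (l - 2))
    (f' := fun y ↦ 1 + exp y * (y - 1)) (fun y ↦ ?_) (fun y _ ↦ ?_) (by norm_num) hl
  · exact (((hasDerivAt_id' y).add_const 2).add
      ((hasDerivAt_exp y).mul ((hasDerivAt_id' y).sub_const 2))).congr_deriv (by ring)
  · have h := add_one_le_exp (-y)
    have h' : exp y * exp (-y) = 1 := by rw [← exp_add]; simp
    nlinarith [exp_pos y]

lemma one_sub_div_three_mul_exp_sub_one_sub_le {l : ℝ} (hl : 0 ≤ l) :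
    (1 - l / 3) * (exp l - 1 - l) ≤ l ^ 2 / 2 := by
  suffices 0 ≤ l ^ 2 / 2 - (1 - l / 3) * (exp l - 1 - l) by linarith
  refine nonneg_of_hasDerivAt_of_map_zero
    (f := fun l ↦ l ^ 2 / 2 - (1 - l / 3) * (exp l - 1 - l))
    (f' := fun y ↦ (y + 2 + exp y * (y - 2)) / 3) (fun y ↦ ?_)
    (fun y hy ↦ by have := add_two_add_exp_mul_sub_two_nonneg hy.le; positivity) (by simp) hl
  exact (((hasDerivAt_pow 2 y).div_const 2).sub
    ((((hasDerivAt_id' y).div_const 3).const_sub 1).mul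
      (((hasDerivAt_exp y).sub_const 1).sub (hasDerivAt_id' y)))).congr_deriv
    (by simp only [Pi.sub_apply]; ring)

lemma exp_neg_sub_one_add_le {l : ℝ} (hl : 0 ≤ l) : exp (-l) - 1 + l ≤ l ^ 2 / 2 := by
  have hq := quadratic_le_exp_of_nonneg hl
  have h : exp (-l) * exp l = 1 := by rw [← exp_add]; simp
  nlinarith [exp_pos (-l), sq_nonneg l]

lemma exp_mul_le_one_add_mul_exp_sub_one {y : ℝ} (hy : y ∈ Set.Icc (0 : ℝ) 1) (l : ℝ) :
    exp (l * y) ≤ 1 + y * (exp l - 1) := by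
  have h := convexOn_exp.2 (Set.mem_univ 0) (Set.mem_univ l) (sub_nonneg.2 hy.2) hy.1
    (sub_add_cancel 1 y)
  simp only [smul_eq_mul, mul_zero, zero_add, exp_zero, mul_one] at h
  rw [mul_comm]; linarith

end Real

lemma abs_pow_sub_pow_le_mul_abs_sub {a b : ℝ} (ha : a ∈ Set.Icc (0 : ℝ) 1)
    (hb : b ∈ Set.Icc (0 : ℝ) 1) (t : ℕ) : |a ^ t - b ^ t| ≤ t * |a - b| := by
  have hmax : max |a| |b| ^ (t - 1) ≤ 1 :=
    pow_le_one₀ (by positivity) (max_le (abs_le.2 ⟨by linarith [ha.1], ha.2⟩)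
      (abs_le.2 ⟨by linarith [hb.1], hb.2⟩))
  calc |a ^ t - b ^ t| ≤ |a - b| * t * max |a| |b| ^ (t - 1) := abs_pow_sub_pow_le ..
    _ ≤ |a - b| * t * 1 := by gcongr
    _ = t * |a - b| := by ring

lemma inv_mul_sum_mem_Icc {n : ℕ} (hn : 0 < n) {z : Fin n → ℝ}
    (hz : ∀ i, z i ∈ Set.Icc (0 : ℝ) 1) : (n : ℝ)⁻¹ * ∑ i, z i ∈ Set.Icc (0 : ℝ) 1 := by
  refine ⟨mul_nonneg (by positivity) (Finset.sum_nonneg fun i _ ↦ (hz i).1), ?_⟩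
  rw [inv_mul_le_iff₀ (by exact_mod_cast hn), mul_one]
  simpa using Finset.sum_le_card_nsmul Finset.univ z 1 fun i _ ↦ (hz i).2

lemma le_abs_sum_sub_of_mul_le_abs_mean_pow_sub_pow {n : ℕ} (hn : 0 < n) {z : Fin n → ℝ}
    (hz : ∀ i, z i ∈ Set.Icc (0 : ℝ) 1) {b D : ℝ} (hb : b ∈ Set.Icc (0 : ℝ) 1) {t : ℕ}
    (ht : 0 < t) (h : t * (D / n) ≤ |((n : ℝ)⁻¹ * ∑ i, z i) ^ t - b ^ t|) :
    D ≤ |∑ i, z i - n * b| := by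
  have hn0 : (0 : ℝ) < n := by exact_mod_cast hn
  have hmean : D / n ≤ |(n : ℝ)⁻¹ * ∑ i, z i - b| := le_of_mul_le_mul_left
    (h.trans (abs_pow_sub_pow_le_mul_abs_sub (inv_mul_sum_mem_Icc hn hz) hb t)) (by positivity)
  rwa [show (n : ℝ)⁻¹ * ∑ i, z i - b = (∑ i, z i - n * b) / n by field_simp, abs_div,
    abs_of_pos hn0, div_le_div_iff_of_pos_right hn0] at hmean

namespace ProbabilityTheory

variable {Ω ι : Type*} [MeasurableSpace Ω] {P : Measure Ω} [IsProbabilityMeasure P]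

lemma mgf_le_exp_integral_mul_exp_sub_one {Y : Ω → ℝ} (hY : Measurable Y)
    (hY01 : ∀ᵐ ω ∂P, Y ω ∈ Set.Icc (0 : ℝ) 1) (l : ℝ) :
    mgf Y P l ≤ exp (P[Y] * (exp l - 1)) := by
  have hYint : Integrable Y P := .of_mem_Icc 0 1 hY.aemeasurable hY01
  calc mgf Y P l ≤ ∫ ω, (1 + Y ω * (exp l - 1)) ∂P :=
        integral_mono_ae (integrable_exp_mul_of_mem_Icc hY.aemeasurable hY01)
          ((integrable_const 1).add (hYint.mul_const _))
          (hY01.mono fun ω hω ↦ exp_mul_le_one_add_mul_exp_sub_one hω l)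
    _ = P[Y] * (exp l - 1) + 1 := by
        rw [integral_add (integrable_const 1) (hYint.mul_const _), integral_const,
          integral_mul_const]
        simp [add_comm]
    _ ≤ exp (P[Y] * (exp l - 1)) := add_one_le_exp _

variable [Fintype ι] {Y : ι → Ω → ℝ}

lemma iIndepFun.mgf_sum_le_of_mem_Icc (hindep : iIndepFun Y P) (hY : ∀ i, Measurable (Y i))
    (hY01 : ∀ i, ∀ᵐ ω ∂P, Y i ω ∈ Set.Icc (0 : ℝ) 1) (l : ℝ) :
    mgf (∑ i, Y i) P l ≤ exp ((∑ i, P[Y i]) * (exp l - 1)) := by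
  rw [hindep.mgf_sum hY, Finset.sum_mul, exp_sum]
  exact Finset.prod_le_prod (fun i _ ↦ mgf_nonneg)
    fun i _ ↦ mgf_le_exp_integral_mul_exp_sub_one (hY i) (hY01 i) l

lemma iIndepFun.measureReal_mean_add_le_sum_le_exp (hindep : iIndepFun Y P)
    (hY : ∀ i, Measurable (Y i)) (hY01 : ∀ i, ∀ᵐ ω ∂P, Y i ω ∈ Set.Icc (0 : ℝ) 1)
    (D : ℝ) {l : ℝ} (hl : 0 ≤ l) :
    P.real {ω | (∑ i, P[Y i]) + D ≤ ∑ i, Y i ω}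
      ≤ exp ((∑ i, P[Y i]) * (exp l - 1 - l) - l * D) := by
  set μ := ∑ i, P[Y i]
  have hint := hindep.integrable_exp_mul_sum (s := Finset.univ) (t := l) hY
    fun i _ ↦ integrable_exp_mul_of_mem_Icc (hY i).aemeasurable (hY01 i)
  calc P.real {ω | μ + D ≤ ∑ i, Y i ω} = P.real {ω | μ + D ≤ (∑ i, Y i) ω} := by
        simp only [Finset.sum_apply]
    _ ≤ exp (-l * (μ + D)) * mgf (∑ i, Y i) P l := measure_ge_le_exp_mul_mgf _ hl hint
    _ ≤ exp (-l * (μ + D)) * exp (μ * (exp l - 1)) := by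
        gcongr; exact hindep.mgf_sum_le_of_mem_Icc hY hY01 l
    _ = exp (μ * (exp l - 1 - l) - l * D) := by rw [← exp_add]; ring_nf

lemma iIndepFun.measureReal_sum_le_mean_sub_le_exp (hindep : iIndepFun Y P)
    (hY : ∀ i, Measurable (Y i)) (hY01 : ∀ i, ∀ᵐ ω ∂P, Y i ω ∈ Set.Icc (0 : ℝ) 1)
    (D : ℝ) {l : ℝ} (hl : 0 ≤ l) :
    P.real {ω | ∑ i, Y i ω ≤ (∑ i, P[Y i]) - D}
      ≤ exp ((∑ i, P[Y i]) * (exp (-l) - 1 + l) - l * D) := by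
  set μ := ∑ i, P[Y i]
  have hint := hindep.integrable_exp_mul_sum (s := Finset.univ) (t := -l) hY
    fun i _ ↦ integrable_exp_mul_of_mem_Icc (hY i).aemeasurable (hY01 i)
  calc P.real {ω | ∑ i, Y i ω ≤ μ - D} = P.real {ω | (∑ i, Y i) ω ≤ μ - D} := by
        simp only [Finset.sum_apply]
    _ ≤ exp (- -l * (μ - D)) * mgf (∑ i, Y i) P (-l) :=
        measure_le_le_exp_mul_mgf _ (neg_nonpos.2 hl) hint
    _ ≤ exp (- -l * (μ - D)) * exp (μ * (exp (-l) - 1)) := by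
        gcongr; exact hindep.mgf_sum_le_of_mem_Icc hY hY01 (-l)
    _ = exp (μ * (exp (-l) - 1 + l) - l * D) := by rw [← exp_add]; ring_nf

lemma iIndepFun.measureReal_mean_add_le_sum_le_bernstein (hindep : iIndepFun Y P)
    (hY : ∀ i, Measurable (Y i)) (hY01 : ∀ i, ∀ᵐ ω ∂P, Y i ω ∈ Set.Icc (0 : ℝ) 1)
    {v D : ℝ} (hv : 0 < v) (hμv : ∑ i, P[Y i] ≤ v) (hD : 0 ≤ D) :
    P.real {ω | (∑ i, P[Y i]) + D ≤ ∑ i, Y i ω} ≤ exp (-(D ^ 2 / (2 * (v + D / 3)))) := by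
  set w := v + D / 3
  have hw : 0 < w := by positivity
  set l := D / w
  have hl : 0 ≤ l := by positivity
  have hlw : l * w = D := div_mul_cancel₀ D hw.ne'
  have hv_eq : (1 - l / 3) * w = v := by
    linear_combination (-1 / 3 : ℝ) * hlw + (rfl : w = v + D / 3)
  have hexp : 0 ≤ exp l - 1 - l := by linarith [add_one_le_exp l]
  -- `l` minimises the Bernstein exponent `w * l ^ 2 / 2 - l * D`
  have hvar : v * (exp l - 1 - l) ≤ l * D / 2 :=
    calc v * (exp l - 1 - l) = w * ((1 - l / 3) * (exp l - 1 - l)) := by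
          rw [← hv_eq]; ring
      _ ≤ w * (l ^ 2 / 2) := by gcongr; exact one_sub_div_three_mul_exp_sub_one_sub_le hl
      _ = l * D / 2 := by rw [← hlw]; ring
  refine (hindep.measureReal_mean_add_le_sum_le_exp hY hY01 D hl).trans (exp_le_exp.2 ?_)
  have hlD : l * D / 2 = D ^ 2 / (2 * w) := by simp only [l]; field_simp
  nlinarith [mul_le_mul_of_nonneg_right hμv hexp]

lemma iIndepFun.measureReal_sum_le_mean_sub_le_bernstein (hindep : iIndepFun Y P)
    (hY : ∀ i, Measurable (Y i)) (hY01 : ∀ i, ∀ᵐ ω ∂P, Y i ω ∈ Set.Icc (0 : ℝ) 1)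
    {v D : ℝ} (hv : 0 < v) (hμv : ∑ i, P[Y i] ≤ v) (hD : 0 ≤ D) :
    P.real {ω | ∑ i, Y i ω ≤ (∑ i, P[Y i]) - D} ≤ exp (-(D ^ 2 / (2 * v))) := by
  set l := D / v
  have hl : 0 ≤ l := by positivity
  have hexp : 0 ≤ exp (-l) - 1 + l := by linarith [add_one_le_exp (-l)]
  refine (hindep.measureReal_sum_le_mean_sub_le_exp hY hY01 D hl).trans (exp_le_exp.2 ?_)
  have hquad : v * (l ^ 2 / 2) - l * D = -(D ^ 2 / (2 * v)) := by simp only [l]; field_simp; ring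
  nlinarith [mul_le_mul_of_nonneg_right hμv hexp,
    mul_le_mul_of_nonneg_left (exp_neg_sub_one_add_le hl) hv.le]

lemma iIndepFun.measureReal_le_abs_sum_sub_mean_le (hindep : iIndepFun Y P)
    (hY : ∀ i, Measurable (Y i)) (hY01 : ∀ i, ∀ᵐ ω ∂P, Y i ω ∈ Set.Icc (0 : ℝ) 1)
    {v L : ℝ} (hv : 0 < v) (hμv : ∑ i, P[Y i] ≤ v) (hL : 0 ≤ L) :
    P.real {ω | √(2 * v * L) + 2 * L / 3 ≤ |∑ i, Y i ω - ∑ i, P[Y i]|} ≤ 2 * exp (-L) := by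
  set μ := ∑ i, P[Y i]
  set D := √(2 * v * L) + 2 * L / 3
  have hD : 0 ≤ D := by positivity
  have hsq : √(2 * v * L) ^ 2 = 2 * v * L := sq_sqrt (by positivity)
  have hupper : exp (-(D ^ 2 / (2 * (v + D / 3)))) ≤ exp (-L) := by
    rw [exp_le_exp, neg_le_neg_iff, le_div_iff₀ (by positivity)]
    simp only [D]
    nlinarith [mul_nonneg hL (sqrt_nonneg (2 * v * L))]
  have hlower : exp (-(D ^ 2 / (2 * v))) ≤ exp (-L) := by
    rw [exp_le_exp, neg_le_neg_iff, le_div_iff₀ (by positivity)]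
    simp only [D]
    nlinarith [mul_nonneg hL (sqrt_nonneg (2 * v * L))]
  have hsub : {ω | D ≤ |∑ i, Y i ω - μ|} ⊆
      {ω | μ + D ≤ ∑ i, Y i ω} ∪ {ω | ∑ i, Y i ω ≤ μ - D} := by
    intro ω (hω : D ≤ |_|)
    rcases le_abs'.1 hω with h | h
    · exact Or.inr (show ∑ i, Y i ω ≤ μ - D by linarith)
    · exact Or.inl (show μ + D ≤ ∑ i, Y i ω by linarith)
  calc P.real {ω | D ≤ |∑ i, Y i ω - μ|}
      ≤ P.real {ω | μ + D ≤ ∑ i, Y i ω} + P.real {ω | ∑ i, Y i ω ≤ μ - D} :=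
        (measureReal_mono hsub).trans (measureReal_union_le _ _)
    _ ≤ exp (-L) + exp (-L) := add_le_add
        ((hindep.measureReal_mean_add_le_sum_le_bernstein hY hY01 hv hμv hD).trans hupper)
        ((hindep.measureReal_sum_le_mean_sub_le_bernstein hY hY01 hv hμv hD).trans hlower)
    _ = 2 * exp (-L) := by ring

lemma iIndepFun.measureReal_le_abs_sum_ite_le_sub_le {X : ι → Ω → ℝ} (hindep : iIndepFun X P)
    (hX : ∀ i, Measurable (X i)) {x p v L : ℝ} (hp : ∀ i, P.real {ω | X i ω ≤ x} = p)
    (hv : 0 < v) (hpv : Fintype.card ι * (1 - p) ≤ v) (hL : 0 ≤ L) :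
    P.real {ω | √(2 * v * L) + 2 * L / 3
        ≤ |∑ i, (if X i ω ≤ x then (1 : ℝ) else 0) - Fintype.card ι * p|} ≤ 2 * exp (-L) := by
  set g : ℝ → ℝ := fun r ↦ 1 - if r ≤ x then 1 else 0
  have hg : Measurable g :=
    measurable_const.sub (Measurable.ite measurableSet_Iic measurable_const measurable_const)
  have hmean : ∀ i, P[g ∘ X i] = 1 - p := fun i ↦ by
    have hs : MeasurableSet {ω | X i ω ≤ x} := hX i measurableSet_Iic
    have hind : g ∘ X i = fun ω ↦ 1 - {ω | X i ω ≤ x}.indicator 1 ω := by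
      ext ω; simp [g, Set.indicator_apply]
    rw [hind, integral_sub (integrable_const 1) ((integrable_const 1).indicator hs),
      integral_indicator_one hs, hp i]
    simp
  have hbound := (hindep.comp (fun _ ↦ g) fun _ ↦ hg).measureReal_le_abs_sum_sub_mean_le
    (fun i ↦ hg.comp (hX i))
    (fun i ↦ ae_of_all _ fun ω ↦ by simp only [g, Function.comp_apply]; split_ifs <;> simp)
    hv (by simpa only [hmean, Finset.sum_const, Finset.card_univ, nsmul_eq_mul] using hpv) hL
  have hsum : ∀ ω, ∑ i, (g ∘ X i) ω - ∑ i, P[g ∘ X i]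
      = -(∑ i, (if X i ω ≤ x then (1 : ℝ) else 0) - Fintype.card ι * p) := fun ω ↦ by
    simp only [hmean]
    simp only [g, Function.comp_apply, Finset.sum_sub_distrib, Finset.sum_const,
      Finset.card_univ, nsmul_eq_mul]
    ring
  simpa only [hsum, abs_neg] using hbound

end ProbabilityTheory

theorem powered_empirical_cdf_concentration_of_light_tail_general
    {Ω : Type*} [MeasurableSpace Ω] (P : Measure Ω) [IsProbabilityMeasure P]
    (n : ℕ) (hn : 1 ≤ n) (X : Fin n → Ω → ℝ)
    (hmeas : ∀ i, Measurable (X i))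
    (hindep : iIndepFun X P)
    (F : ℝ → ℝ)
    (hF : ∀ i x, F x = (P {ω | X i ω ≤ x}).toReal)
    (t : ℕ) (ht : 1 ≤ t)
    (x : ℝ) (hx : 1 - F x ≤ 1 / (t : ℝ) ^ 2)
    (δ : ℝ) (hδ : δ ∈ Set.Ioo (0 : ℝ) 2) :
    P {ω | Real.sqrt (2 * Real.log (2 / δ) / n)
            + 2 * t * Real.log (2 / δ) / (3 * n)
          ≤ |((n : ℝ)⁻¹ * (∑ i, if X i ω ≤ x then (1 : ℝ) else 0)) ^ t - F x ^ t|}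
      ≤ ENNReal.ofReal δ := by
  obtain ⟨hδ0, hδ2⟩ := hδ
  have hn0 : (0 : ℝ) < n := by exact_mod_cast hn
  set L := log (2 / δ)
  have hL : 0 ≤ L := log_nonneg (by rw [le_div_iff₀ hδ0]; linarith)
  have hδL : 2 * exp (-L) = δ := by rw [exp_neg, exp_log (by positivity)]; field_simp
  have hF01 : F x ∈ Set.Icc (0 : ℝ) 1 := by
    rw [hF ⟨0, hn⟩ x]; exact ⟨ENNReal.toReal_nonneg, measureReal_le_one⟩
  have hvar : (Fintype.card (Fin n) : ℝ) * (1 - F x) ≤ n / t ^ 2 := by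
    rw [Fintype.card_fin, div_eq_mul_one_div]; exact mul_le_mul_of_nonneg_left hx hn0.le
  have hcount := hindep.measureReal_le_abs_sum_ite_le_sub_le hmeas
    (fun i ↦ (hF i x).symm) (by positivity) hvar hL
  rw [Fintype.card_fin] at hcount
  have hε : √(2 * L / n) + 2 * t * L / (3 * n)
      = t * ((√(2 * (n / t ^ 2) * L) + 2 * L / 3) / n) := by
    rw [show 2 * (n / t ^ 2) * L = (n / t) ^ 2 * (2 * L / n) by field_simp,
      sqrt_mul (by positivity), sqrt_sq (by positivity)]
    field_simp
  calc P _ ≤ P {ω | √(2 * (n / t ^ 2) * L) + 2 * L / 3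
        ≤ |∑ i, (if X i ω ≤ x then (1 : ℝ) else 0) - n * F x|} :=
        measure_mono fun ω hω ↦ le_abs_sum_sub_of_mul_le_abs_mean_pow_sub_pow hn
          (fun i ↦ by split_ifs <;> simp) hF01 ht (hε ▸ hω)
    _ ≤ ENNReal.ofReal δ := by
        rw [← ofReal_measureReal]; exact ENNReal.ofReal_le_ofReal (hδL ▸ hcount)

/-- If `X 1, …, X n` (`n ≥ 1`) are i.i.d. real-valued random variables with common CDF
`F`, `Fₙ` is their empirical CDF, `t ≥ 1`, and `x : ℝ` satisfies `1 - F x ≤ 1 / t²`,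
then for every `δ ∈ (0,2)`,
`P(|Fₙ x ^ t - F x ^ t| ≥ √(2 log (2/δ) / n) + 2 t log (2/δ) / (3 n)) ≤ δ`. -/
theorem powered_empirical_cdf_concentration_of_light_tail
    {Ω : Type*} [MeasurableSpace Ω] (P : Measure Ω) [IsProbabilityMeasure P]
    (n : ℕ) (hn : 1 ≤ n) (X : Fin n → Ω → ℝ)
    (hmeas : ∀ i, Measurable (X i))
    (hindep : iIndepFun X P)
    (hident : ∀ i j, IdentDistrib (X i) (X j) P P)
    (F : ℝ → ℝ)
    (hF : ∀ i x, F x = (P {ω | X i ω ≤ x}).toReal)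
    (t : ℕ) (ht : 1 ≤ t)
    (x : ℝ) (hx : 1 - F x ≤ 1 / (t : ℝ) ^ 2)
    (δ : ℝ) (hδ : δ ∈ Set.Ioo (0 : ℝ) 2) :
    P {ω | Real.sqrt (2 * Real.log (2 / δ) / n)
            + 2 * t * Real.log (2 / δ) / (3 * n)
          ≤ |((n : ℝ)⁻¹ * (∑ i, if X i ω ≤ x then (1 : ℝ) else 0)) ^ t - F x ^ t|}
      ≤ ENNReal.ofReal δ :=
  powered_empirical_cdf_concentration_of_light_tail_general P n hn X hmeas hindep F hF t ht x hx δ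
    hδ
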